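/- In the group of 3×3 upper unitriangular matrices over ℤ with A = !![1,1,0; 0,1,0; 0,0,1], B = !![1,0,0; 0,1,1; 0,0,1], C = !![1,0,1; 0,1,0; 0,0,1], the subgroup ⟨C⟩ is not undistorted in the group generated by {A, B, C}: there is no constant D such that every element h of ⟨C⟩ satisfies ℓ_{{C}}(h) ≤ D · ℓ_{{A,B,C}}(h). -/

import Mathlib

open Pointwise

/-- The word length of `g` with respect to a generating set `S`: the least length of a list
of elements of `S ∪ S⁻¹` whose product is `g`. -/
noncomputable def wordLength {G : Type*} [Group G] (S : Set G) (g : G) : ℕ :=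
  sInf {n : ℕ | ∃ l : List G, (∀ x ∈ l, x ∈ S ∪ S⁻¹) ∧ l.prod = g ∧ l.length = n}

/-- The generator `A = !![1,1,0; 0,1,0; 0,0,1]` of the integer Heisenberg group, as a unit
of the ring of 3×3 integer matrices. -/
def heisA : (Matrix (Fin 3) (Fin 3) ℤ)ˣ where
  val := !![1,1,0; 0,1,0; 0,0,1]
  inv := !![1,-1,0; 0,1,0; 0,0,1]
  val_inv := by simp [Matrix.mul_fin_three, ← Matrix.one_fin_three]
  inv_val := by simp [Matrix.mul_fin_three, ← Matrix.one_fin_three]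

/-- The generator `B = !![1,0,0; 0,1,1; 0,0,1]` of the integer Heisenberg group. -/
def heisB : (Matrix (Fin 3) (Fin 3) ℤ)ˣ where
  val := !![1,0,0; 0,1,1; 0,0,1]
  inv := !![1,0,0; 0,1,-1; 0,0,1]
  val_inv := by simp [Matrix.mul_fin_three, ← Matrix.one_fin_three]
  inv_val := by simp [Matrix.mul_fin_three, ← Matrix.one_fin_three]

/-- The central element `C = !![1,0,1; 0,1,0; 0,0,1]` of the integer Heisenberg group. -/
def heisC : (Matrix (Fin 3) (Fin 3) ℤ)ˣ where
  val := !![1,0,1; 0,1,0; 0,0,1]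
  inv := !![1,0,-1; 0,1,0; 0,0,1]
  val_inv := by simp [Matrix.mul_fin_three, ← Matrix.one_fin_three]
  inv_val := by simp [Matrix.mul_fin_three, ← Matrix.one_fin_three]

/-!
If `c` commutes with `a` and `b` and `a * b = c * (b * a)`, then
`a ^ n * b ^ n * (a ^ n)⁻¹ * (b ^ n)⁻¹ = c ^ (n ^ 2)`, so `c ^ (n ^ 2)` has word length at most
`4 n` over `{a, b}`. If `c` has infinite order, every word over `{c}` evaluating to `c ^ (n ^ 2)`
has length at least `n ^ 2`. In the Heisenberg group `A * B = C * (B * A)` with `C` central of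
infinite order, and `n ^ 2 ≤ D * (4 n)` fails for `n = 4 D + 1`.
-/

section WordLength

variable {G : Type*} [Group G] {S : Set G}

theorem wordLength_prod_le_length {l : List G} (hl : ∀ x ∈ l, x ∈ S ∪ S⁻¹) :
    wordLength S l.prod ≤ l.length :=
  Nat.sInf_le ⟨l, hl, rfl, rfl⟩

theorem le_wordLength {g : G} {n : ℕ}
    (hne : ∃ l : List G, (∀ x ∈ l, x ∈ S ∪ S⁻¹) ∧ l.prod = g)
    (hle : ∀ l : List G, (∀ x ∈ l, x ∈ S ∪ S⁻¹) → l.prod = g → n ≤ l.length) :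
    n ≤ wordLength S g := by
  obtain ⟨l, hl, hprod⟩ := hne
  refine le_csInf ⟨l.length, l, hl, hprod, rfl⟩ ?_
  rintro m ⟨l', hl', hprod', rfl⟩
  exact hle l' hl' hprod'

theorem exists_prod_eq_zpow_natAbs_le_length {g : G} {l : List G}
    (hl : ∀ x ∈ l, x ∈ ({g} : Set G) ∪ {g}⁻¹) :
    ∃ z : ℤ, l.prod = g ^ z ∧ z.natAbs ≤ l.length := by
  induction l with
  | nil => exact ⟨0, by simp⟩
  | cons x t ih =>
    obtain ⟨z, hz, hlen⟩ := ih fun y hy => hl y (List.mem_cons_of_mem x hy)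
    rcases hl x List.mem_cons_self with rfl | hx
    · refine ⟨z + 1, ?_, by rw [List.length_cons]; omega⟩
      rw [List.prod_cons, hz, add_comm, zpow_add, zpow_one]
    · rw [Set.mem_inv, Set.mem_singleton_iff, inv_eq_iff_eq_inv] at hx
      subst hx
      refine ⟨z - 1, ?_, by rw [List.length_cons]; omega⟩
      rw [List.prod_cons, hz, sub_eq_neg_add, zpow_add, zpow_neg_one]

theorem le_wordLength_singleton_pow {g : G} (hg : ¬ IsOfFinOrder g) (n : ℕ) :
    n ≤ wordLength {g} (g ^ n) := by
  refine le_wordLength ⟨List.replicate n g, ?_, List.prod_replicate n g⟩ ?_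
  · intro x hx
    exact Or.inl (List.eq_of_mem_replicate hx)
  · intro l hl hprod
    obtain ⟨z, hz, hlen⟩ := exists_prod_eq_zpow_natAbs_le_length hl
    have hzn : z = n := injective_zpow_iff_not_isOfFinOrder.mpr hg <| by
      simpa [← hz] using hprod
    omega

end WordLength

section Commutator

variable {G : Type*} [Group G] {a b c : G}

theorem mul_pow_eq_of_mul_eq_mul_mul (hcb : Commute c b) (hab : a * b = c * (b * a)) (n : ℕ) :
    a * b ^ n = c ^ n * (b ^ n * a) := by
  induction n with
  | zero => simp
  | succ k ih =>
    rw [pow_succ, ← mul_assoc, ih, mul_assoc, mul_assoc, hab, ← mul_assoc (b ^ k) c,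
      ← (hcb.pow_right k).eq]
    simp only [pow_succ, mul_assoc]

theorem pow_mul_pow_eq_of_mul_eq_mul_mul (hca : Commute c a) (hcb : Commute c b)
    (hab : a * b = c * (b * a)) (m n : ℕ) :
    a ^ m * b ^ n = c ^ (m * n) * (b ^ n * a ^ m) := by
  induction m with
  | zero => simp
  | succ k ih =>
    rw [pow_succ', mul_assoc, ih, ← mul_assoc, ← (hca.pow_left _).eq, mul_assoc,
      ← mul_assoc a, mul_pow_eq_of_mul_eq_mul_mul hcb hab, add_one_mul, pow_add]
    simp only [mul_assoc]

theorem commutator_pow_eq_pow_sq (hca : Commute c a) (hcb : Commute c b)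
    (hab : a * b = c * (b * a)) (n : ℕ) :
    a ^ n * b ^ n * (a ^ n)⁻¹ * (b ^ n)⁻¹ = c ^ (n ^ 2) := by
  rw [pow_mul_pow_eq_of_mul_eq_mul_mul hca hcb hab, sq]
  group

theorem wordLength_pow_sq_le {S : Set G} (ha : a ∈ S) (hb : b ∈ S) (hca : Commute c a)
    (hcb : Commute c b) (hab : a * b = c * (b * a)) (n : ℕ) :
    wordLength S (c ^ (n ^ 2)) ≤ 4 * n := by
  have hword : (List.replicate n a ++ List.replicate n b ++ List.replicate n a⁻¹ ++
      List.replicate n b⁻¹).prod = c ^ (n ^ 2) := by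
    simp only [List.prod_append, List.prod_replicate, inv_pow]
    exact commutator_pow_eq_pow_sq hca hcb hab n
  rw [← hword]
  refine (wordLength_prod_le_length ?_).trans_eq ?_
  · intro x hx
    simp only [List.mem_append, List.mem_replicate] at hx
    rcases hx with ((⟨-, rfl⟩ | ⟨-, rfl⟩) | ⟨-, rfl⟩) | ⟨-, rfl⟩
    · exact Or.inl ha
    · exact Or.inl hb
    · exact Or.inr (by simpa using ha)
    · exact Or.inr (by simpa using hb)
  · simp only [List.length_append, List.length_replicate]
    ring

end Commutator

section Heisenberg

theorem heisA_mul_heisB : heisA * heisB = heisC * (heisB * heisA) := by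
  ext i j
  fin_cases i <;> fin_cases j <;> simp [heisA, heisB, heisC, Matrix.mul_apply, Fin.sum_univ_three]

theorem commute_heisC_heisA : Commute heisC heisA := by
  ext i j
  fin_cases i <;> fin_cases j <;> simp [heisA, heisC, Matrix.mul_apply, Fin.sum_univ_three]

theorem commute_heisC_heisB : Commute heisC heisB := by
  ext i j
  fin_cases i <;> fin_cases j <;> simp [heisB, heisC, Matrix.mul_apply, Fin.sum_univ_three]

theorem val_heisC_pow (n : ℕ) : ((heisC ^ n : (Matrix (Fin 3) (Fin 3) ℤ)ˣ) :
    Matrix (Fin 3) (Fin 3) ℤ) = !![1, 0, (n : ℤ); 0, 1, 0; 0, 0, 1] := by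
  induction n with
  | zero => simp [← Matrix.one_fin_three]
  | succ k ih =>
    rw [pow_succ, Units.val_mul, ih]
    simp [heisC, add_comm]

theorem not_isOfFinOrder_heisC : ¬ IsOfFinOrder heisC := by
  rw [isOfFinOrder_iff_pow_eq_one]
  rintro ⟨n, hn, hpow⟩
  have h02 : (↑(heisC ^ n) : Matrix (Fin 3) (Fin 3) ℤ) 0 2 = n := by
    rw [val_heisC_pow]
    rfl
  rw [hpow, Units.val_one, Matrix.one_apply_ne (by decide)] at h02
  omega

end Heisenberg

/-- In the integer Heisenberg group of 3×3 unitriangular matrices, the center `⟨C⟩` is not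
undistorted in the group generated by `{A, B, C}`: there is no constant `D` with
`ℓ_{C}(h) ≤ D * ℓ_{A,B,C}(h)` for every `h ∈ ⟨C⟩`. -/
theorem heisenberg_center_not_undistorted :
    ¬ ∃ D : ℕ, ∀ h ∈ Subgroup.closure ({heisC} : Set (Matrix (Fin 3) (Fin 3) ℤ)ˣ),
        wordLength ({heisC} : Set (Matrix (Fin 3) (Fin 3) ℤ)ˣ) h ≤
          D * wordLength ({heisA, heisB, heisC} : Set (Matrix (Fin 3) (Fin 3) ℤ)ˣ) h := by
  rintro ⟨D, hD⟩
  set n := 4 * D + 1 with hn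
  have hmem : heisC ^ (n ^ 2) ∈ Subgroup.closure {heisC} :=
    Subgroup.pow_mem _ (Subgroup.subset_closure (Set.mem_singleton _)) _
  have hbound : n ^ 2 ≤ D * (4 * n) := calc
    n ^ 2 ≤ wordLength {heisC} (heisC ^ (n ^ 2)) :=
      le_wordLength_singleton_pow not_isOfFinOrder_heisC _
    _ ≤ D * wordLength {heisA, heisB, heisC} (heisC ^ (n ^ 2)) := hD _ hmem
    _ ≤ D * (4 * n) := by
      gcongr
      exact wordLength_pow_sq_le (Set.mem_insert _ _)
        (Set.mem_insert_of_mem _ (Set.mem_insert _ _)) commute_heisC_heisA commute_heisC_heisB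
        heisA_mul_heisB n
  nlinarith
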